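/- arXiv:2512.19381 — 2 statements merged into one kernel-verified Lean document; each statement's English description precedes it below -/
import Mathlib

section
/- In the setting of the previous statement, if additionally the strict inequalities |Re(λ_{j1} - λ_{j2})| < 1 hold for all pairs, then the multiset {λ_1,...,λ_k} satisfying e^{2πi λ_j} = μ_j, Σλ_j = c, and the strict inequality condition is unique. -/
open Complex

/-- Uniqueness of the admissible multiset of logarithms: if two families of
logarithms of `μ` sum to `c` and have all pairwise real-part differences of
absolute value strictly less than `1`, then they agree as multisets. -/
theorem stmt_9 {k : ℕ} (μ : Fin k → ℂ) (c : ℂ) (hμ : ∀ j, μ j ≠ 0)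
    (hprod : ∏ j, μ j = Complex.exp (2 * Real.pi * Complex.I * c))
    (l₁ l₂ : Fin k → ℂ)
    (h₁ : ∀ j, Complex.exp (2 * Real.pi * Complex.I * l₁ j) = μ j)
    (h₂ : ∀ j, Complex.exp (2 * Real.pi * Complex.I * l₂ j) = μ j)
    (hs₁ : ∑ j, l₁ j = c) (hs₂ : ∑ j, l₂ j = c)
    (hgap₁ : ∀ j1 j2, |(l₁ j1).re - (l₁ j2).re| < 1)
    (hgap₂ : ∀ j1 j2, |(l₂ j1).re - (l₂ j2).re| < 1) :
    Multiset.map l₁ Finset.univ.val = Multiset.map l₂ Finset.univ.val := by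
  have h2pi : (2 * (Real.pi : ℂ) * Complex.I) ≠ 0 := by
    simp [Real.pi_ne_zero, Complex.I_ne_zero]
  have key : ∀ j, ∃ n : ℤ, l₁ j = l₂ j + n := by
    intro j
    have h := (h₁ j).trans (h₂ j).symm
    rw [Complex.exp_eq_exp_iff_exists_int] at h
    obtain ⟨n, hn⟩ := h
    exact ⟨n, mul_left_cancel₀ h2pi (by push_cast at hn ⊢; ring_nf; ring_nf at hn; linear_combination hn)⟩
  choose n hn using key
  have hsum : ∑ j, n j = 0 := by
    have : ((∑ j, n j : ℤ) : ℂ) = 0 := by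
      push_cast
      have := hs₁.trans hs₂.symm
      calc ∑ j, (n j : ℂ) = ∑ j, (l₁ j - l₂ j) := by
            refine Finset.sum_congr rfl fun j _ => ?_
            rw [hn j]; ring
        _ = ∑ j, l₁ j - ∑ j, l₂ j := by rw [Finset.sum_sub_distrib]
        _ = 0 := by rw [this]; ring
    exact_mod_cast this
  have hre : ∀ j, (l₁ j).re = (l₂ j).re + n j := by
    intro j; rw [hn j]; simp
  have hzero : ∀ j, n j = 0 := by
    intro j
    by_contra hj
    -- there is an index with positive n and one with negative n
    have hex : (∃ jp, 1 ≤ n jp) ∧ (∃ jm, n jm ≤ -1) := by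
      rcases lt_or_gt_of_ne hj with hneg | hpos
      · constructor
        · by_contra hall
          push_neg at hall
          have hlt : ∑ i, n i < ∑ _i : Fin k, (0:ℤ) :=
            Finset.sum_lt_sum (fun i _ => by have := hall i; omega)
              ⟨j, Finset.mem_univ j, hneg⟩
          simp at hlt
          omega
        · exact ⟨j, by omega⟩
      · constructor
        · exact ⟨j, by omega⟩
        · by_contra hall
          push_neg at hall
          have hlt : ∑ _i : Fin k, (0:ℤ) < ∑ i, n i :=
            Finset.sum_lt_sum (fun i _ => by have := hall i; omega)
              ⟨j, Finset.mem_univ j, hpos⟩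
          simp at hlt
          omega
    obtain ⟨⟨jp, hjp⟩, ⟨jm, hjm⟩⟩ := hex
    have g1 := hgap₁ jp jm
    have g2 := hgap₂ jp jm
    rw [abs_lt] at g1 g2
    have e1 := hre jp
    have e2 := hre jm
    have : (2 : ℝ) ≤ (n jp : ℝ) - (n jm : ℝ) := by
      have : (2 : ℤ) ≤ n jp - n jm := by omega
      exact_mod_cast this
    linarith
  have : l₁ = l₂ := funext fun j => by rw [hn j, hzero j]; simp
  rw [this]
end

section
/- The map r ↦ 2·sinh(πr/4) is a bijection from the open horizontal strip {r ∈ ℂ : |Im(r)| < 2} onto ℂ \ (i(-∞,-2] ∪ i[2,∞)). -/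
open Complex Set

private lemma aux_joukowski :
    Set.BijOn (fun w : ℂ => w - 1 / w) {w : ℂ | 0 < w.re}
      (Set.univ \ ({z : ℂ | ∃ t : ℝ, t ≤ -2 ∧ z = Complex.I * t} ∪
        {z : ℂ | ∃ t : ℝ, 2 ≤ t ∧ z = Complex.I * t})) := by
  have key : ∀ w : ℂ, 0 < w.re → ∀ t : ℝ, 2 ≤ |t| → w - 1 / w ≠ Complex.I * t := by
    intro w hw t ht heq
    have hns : 0 < Complex.normSq w := by
      apply Complex.normSq_pos.2
      intro h; rw [h] at hw; simp at hw
    have hre : (w - 1 / w).re = w.re - w.re / Complex.normSq w := by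
      simp [Complex.sub_re, Complex.inv_re, one_div]
    have him : (w - 1 / w).im = w.im + w.im / Complex.normSq w := by
      simp [Complex.sub_im, Complex.inv_im, one_div]
      ring
    have hre0 : (Complex.I * (t : ℂ)).re = 0 := by simp
    have him0 : (Complex.I * (t : ℂ)).im = t := by simp
    rw [heq, hre0] at hre
    rw [heq, him0] at him
    -- from real part: normSq w = 1
    have hn1 : Complex.normSq w = 1 := by
      have h' : w.re * (Complex.normSq w - 1) = 0 := by
        field_simp at hre
        nlinarith [hre]
      rcases mul_eq_zero.1 h' with h | h
      · exact absurd h (ne_of_gt hw)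
      · linarith
    have hsq : w.re ^ 2 + w.im ^ 2 = 1 := by
      have := Complex.normSq_apply w
      nlinarith [hn1]
    have ht2 : t = 2 * w.im := by rw [him, hn1]; ring
    have : |t| < 2 := by
      rw [ht2, abs_mul]
      have h1 : |w.im| < 1 := by
        rw [abs_lt]; constructor <;> nlinarith
      rw [show |(2 : ℝ)| = 2 from abs_of_pos two_pos]
      nlinarith [abs_nonneg w.im]
    linarith
  constructor
  · intro w hw
    simp only [mem_setOf_eq] at hw
    refine ⟨trivial, ?_⟩
    rintro (⟨t, ht, heq⟩ | ⟨t, ht, heq⟩)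
    · exact key w hw t (le_abs.mpr (Or.inr (by linarith))) heq
    · exact key w hw t (le_trans ht (le_abs_self t)) heq
  constructor
  · intro w₁ h₁ w₂ h₂ heq
    simp only [mem_setOf_eq] at h₁ h₂ heq
    have hw₁ : w₁ ≠ 0 := fun h => by rw [h] at h₁; simp at h₁
    have hw₂ : w₂ ≠ 0 := fun h => by rw [h] at h₂; simp at h₂
    have hfac : (w₁ - w₂) * (w₁ * w₂ + 1) = 0 := by
      have h := heq
      field_simp at h
      linear_combination h
    rcases mul_eq_zero.1 hfac with h | h
    · exact sub_eq_zero.1 h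
    · exfalso
      have hw2eq : w₂ = -(1 / w₁) := by
        field_simp
        linear_combination h
      have : w₂.re = -(w₁.re / Complex.normSq w₁) := by
        rw [hw2eq]; simp [Complex.inv_re, one_div]
      have hns : 0 < Complex.normSq w₁ := Complex.normSq_pos.2 hw₁
      rw [this] at h₂
      have : 0 < w₁.re / Complex.normSq w₁ := div_pos h₁ hns
      linarith
  · intro z hz
    simp only [mem_diff, mem_univ, true_and, mem_union, mem_setOf_eq, not_or] at hz
    obtain ⟨s, hs⟩ := IsAlgClosed.exists_pow_nat_eq (k := ℂ) (z ^ 2 + 4) (n := 2) two_pos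
    set w₁ : ℂ := (z + s) / 2 with hw₁def
    set w₂ : ℂ := (z - s) / 2 with hw₂def
    have hprod : w₁ * w₂ = -1 := by
      rw [hw₁def, hw₂def]
      linear_combination (-(1 : ℂ) / 4) * hs
    have hw₁ : w₁ ≠ 0 := by
      intro h; rw [h] at hprod; simp at hprod
    have hw₂ : w₂ ≠ 0 := by
      intro h; rw [h] at hprod; simp at hprod
    have hsum : w₁ + w₂ = z := by rw [hw₁def, hw₂def]; ring
    have hinv₁ : 1 / w₁ = -w₂ := by
      field_simp
      linear_combination (-(1 : ℂ) / 4) * hs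
    have hinv₂ : 1 / w₂ = -w₁ := by
      field_simp
      linear_combination (-(1 : ℂ) / 4) * hs
    have hval₁ : w₁ - 1 / w₁ = z := by rw [hinv₁]; rw [← hsum]; ring
    have hval₂ : w₂ - 1 / w₂ = z := by rw [hinv₂]; rw [← hsum]; ring
    have hns : 0 < Complex.normSq w₁ := Complex.normSq_pos.2 hw₁
    have hre₂ : w₂.re = -(w₁.re / Complex.normSq w₁) := by
      have : w₂ = -(1 / w₁) := by rw [hinv₁]; ring
      rw [this]; simp [Complex.inv_re, one_div]
    rcases lt_trichotomy w₁.re 0 with h | h | h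
    · refine ⟨w₂, ?_, hval₂⟩
      simp only [mem_setOf_eq]
      rw [hre₂]
      have : w₁.re / Complex.normSq w₁ < 0 := div_neg_of_neg_of_pos h hns
      linarith
    · exfalso
      -- w₁ purely imaginary: z on the rays
      set b := w₁.im with hbdef
      have hb : b ≠ 0 := by
        intro hb0
        apply hw₁
        apply Complex.ext <;> simp [h, ← hbdef, hb0]
      have hw₁eq : w₁ = Complex.I * (b : ℂ) := by
        apply Complex.ext <;> simp [h, ← hbdef]
      have hzeq : z = Complex.I * ((b + 1 / b : ℝ) : ℂ) := by
        rw [← hval₁, hw₁eq]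
        have hbC : (b : ℂ) ≠ 0 := Complex.ofReal_ne_zero.2 hb
        push_cast
        field_simp
        linear_combination (-1 : ℂ) * Complex.I_sq
      rcases lt_or_gt_of_ne hb with hbneg | hbpos
      · have hb1 : b * (1 / b) = 1 := by field_simp
        exact hz.1 ⟨b + 1 / b, by nlinarith [sq_nonneg (b + 1), hb1], hzeq⟩
      · have hb1 : b * (1 / b) = 1 := by field_simp
        exact hz.2 ⟨b + 1 / b, by nlinarith [sq_nonneg (b - 1), hb1], hzeq⟩
    · exact ⟨w₁, h, hval₁⟩

private lemma aux_exp_strip :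
    Set.BijOn (fun r : ℂ => Complex.exp ((Real.pi : ℂ) * r / 4)) {r : ℂ | |r.im| < 2}
      {w : ℂ | 0 < w.re} := by
  have him : ∀ r : ℂ, ((Real.pi : ℂ) * r / 4).im = Real.pi * r.im / 4 := by
    intro r
    have : (Real.pi : ℂ) * r / 4 = ((Real.pi / 4 : ℝ) : ℂ) * r := by push_cast; ring
    rw [this, Complex.im_ofReal_mul]; ring
  have hpi : (0 : ℝ) < Real.pi := Real.pi_pos
  constructor
  · intro r hr
    simp only [mem_setOf_eq] at hr ⊢
    rw [Complex.exp_re, him]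
    apply mul_pos (Real.exp_pos _)
    apply Real.cos_pos_of_mem_Ioo
    constructor
    · rw [abs_lt] at hr; nlinarith [hr.1]
    · rw [abs_lt] at hr; nlinarith [hr.2]
  constructor
  · intro r₁ h₁ r₂ h₂ heq
    simp only [mem_setOf_eq] at h₁ h₂
    simp only at heq
    rw [Complex.exp_eq_exp_iff_exists_int] at heq
    obtain ⟨n, hn⟩ := heq
    have him_eq : Real.pi * r₁.im / 4 = Real.pi * r₂.im / 4 + n * (2 * Real.pi) := by
      have h1 := him r₁
      rw [hn] at h1
      rw [← h1, Complex.add_im, him r₂]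
      simp [Complex.mul_im, Complex.mul_re]
    have hn0 : n = 0 := by
      rw [abs_lt] at h₁ h₂
      have h8 : (n : ℝ) * 8 = r₁.im - r₂.im := by
        field_simp at him_eq ⊢
        nlinarith [him_eq]
      have : |(n : ℝ)| < 1 := by
        rw [abs_lt]
        constructor <;> nlinarith [h₁.1, h₁.2, h₂.1, h₂.2]
      have h' : |n| < 1 := by
        rw [← Int.cast_abs] at this
        exact_mod_cast this
      exact Int.abs_lt_one_iff.mp h'
    rw [hn0] at hn
    simp at hn
    have hpiC : (Real.pi : ℂ) ≠ 0 := Complex.ofReal_ne_zero.2 (ne_of_gt hpi)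
    exact hn
  · intro w hw
    simp only [mem_setOf_eq] at hw
    have hw0 : w ≠ 0 := by intro h; rw [h] at hw; simp at hw
    refine ⟨((4 / Real.pi : ℝ) : ℂ) * Complex.log w, ?_, ?_⟩
    · simp only [mem_setOf_eq]
      rw [Complex.im_ofReal_mul, Complex.log_im]
      have harg : |Complex.arg w| < Real.pi / 2 :=
        Complex.abs_arg_lt_pi_div_two_iff.2 (Or.inl hw)
      rw [abs_mul]
      have h4pi : |(4 / Real.pi : ℝ)| = 4 / Real.pi := abs_of_pos (by positivity)
      rw [h4pi]
      calc 4 / Real.pi * |w.arg| < 4 / Real.pi * (Real.pi / 2) := by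
            apply mul_lt_mul_of_pos_left harg (by positivity)
        _ = 2 := by field_simp; ring
    · simp only
      have : (Real.pi : ℂ) * (((4 / Real.pi : ℝ) : ℂ) * Complex.log w) / 4 = Complex.log w := by
        have hpiC : (Real.pi : ℂ) ≠ 0 := Complex.ofReal_ne_zero.2 (ne_of_gt hpi)
        push_cast
        field_simp
      rw [this, Complex.exp_log hw0]

/-- The map `r ↦ 2 sinh(πr/4)` is a bijection from the strip `|Im r| < 2`
onto `ℂ` minus the two closed imaginary rays `i(-∞,-2]` and `i[2,∞)`. -/
theorem stmt_12 :
    Set.BijOn (fun r : ℂ => 2 * Complex.sinh ((Real.pi : ℂ) * r / 4))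
      {r : ℂ | |r.im| < 2}
      (Set.univ \ ({z : ℂ | ∃ t : ℝ, t ≤ -2 ∧ z = Complex.I * t} ∪
        {z : ℂ | ∃ t : ℝ, 2 ≤ t ∧ z = Complex.I * t})) := by
  have hcomp := aux_joukowski.comp aux_exp_strip
  apply hcomp.congr
  intro r _
  simp only [Function.comp_apply]
  rw [Complex.sinh]
  rw [Complex.exp_neg]
  field_simp
end
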